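/- Let r ≥ 1, t ≥ 1 be integers and let d(k) = [Q(ζ_k, Γ^{1/k}) : Q] be a function of k satisfying d(k) ≥ φ(k)·(k/2)^r / Δ for some constant Δ > 0. Then the series ∑_{k ≥ 1} J_t(k) · rad(k)^t / (k^{2t} · d(k)) converges absolutely, and its tail over k > z is O_{Δ,r,t}(log z / z^r) for z ≥ 2. -/
import Mathlib

/-- Jordan totient `J_t(m) = m^t · ∏_{p ∣ m} (1 - 1/p^t)` as a real number. -/
noncomputable def jordanTotient (t m : ℕ) : ℝ :=
  (m : ℝ) ^ t * ∏ p ∈ m.primeFactors, (1 - 1 / (p : ℝ) ^ t)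

/-- The radical of `k`: the product of the distinct primes dividing `k`. -/
def rad (k : ℕ) : ℕ := ∏ p ∈ k.primeFactors, p

open Finset


-- NT2
lemma prod_one_sub_inv_ge (S : Finset ℕ) (hS : ∀ p ∈ S, 2 ≤ p) :
    (1:ℝ) ≤ ((S.card : ℝ) + 1) * ∏ p ∈ S, (1 - (p:ℝ)⁻¹) := by
  induction S using Finset.strongInduction with
  | _ S ih =>
    rcases S.eq_empty_or_nonempty with h | hne
    · simp [h]
    · set M := S.max' hne with hM
      have hMS : M ∈ S := S.max'_mem hne
      have hM2 : 2 ≤ M := hS M hMS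
      have hsub : S ⊆ Finset.Icc 2 M := fun p hp =>
        Finset.mem_Icc.mpr ⟨hS p hp, S.le_max' p hp⟩
      have hcard : S.card ≤ M - 1 := by
        have := Finset.card_le_card hsub
        simpa [Nat.card_Icc] using this
      have hcardM : S.card + 1 ≤ M := by omega
      set S' := S.erase M with hS'
      have hcard' : S'.card + 1 = S.card := by
        rw [hS', Finset.card_erase_of_mem hMS]
        have : 1 ≤ S.card := Finset.card_pos.mpr hne
        omega
      have ihS' : (1:ℝ) ≤ ((S'.card : ℝ) + 1) * ∏ p ∈ S', (1 - (p:ℝ)⁻¹) :=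
        ih S' (Finset.erase_ssubset hMS) (fun p hp => hS p (Finset.mem_of_mem_erase hp))
      have hP'nonneg : (0:ℝ) ≤ ∏ p ∈ S', (1 - (p:ℝ)⁻¹) := by
        apply Finset.prod_nonneg
        intro p hp
        have h2 : 2 ≤ p := hS p (Finset.mem_of_mem_erase hp)
        have : (p:ℝ)⁻¹ ≤ 1 := by
          rw [inv_le_one_iff₀]; right; exact_mod_cast Nat.one_le_iff_ne_zero.mpr (by omega)
        linarith
      have hprod : ∏ p ∈ S, (1 - (p:ℝ)⁻¹) = (1 - (M:ℝ)⁻¹) * ∏ p ∈ S', (1 - (p:ℝ)⁻¹) :=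
        (Finset.mul_prod_erase S _ hMS).symm
      rw [hprod]
      have hMR : ((S.card : ℝ) + 1) ≤ (M:ℝ) := by exact_mod_cast hcardM
      have hMpos : (0:ℝ) < M := by positivity
      -- (card S + 1)(1 - 1/M) ≥ card S = card S' + 1
      have h1 : ((S'.card : ℝ) + 1) ≤ ((S.card : ℝ) + 1) * (1 - (M:ℝ)⁻¹) := by
        have hcR : ((S'.card : ℝ) + 1) = (S.card : ℝ) := by exact_mod_cast hcard'
        rw [mul_one_sub, hcR]
        have : ((S.card : ℝ) + 1) * (M:ℝ)⁻¹ ≤ 1 := by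
          rw [← div_eq_mul_inv, div_le_one hMpos]; exact hMR
        linarith
      calc (1:ℝ) ≤ ((S'.card : ℝ) + 1) * ∏ p ∈ S', (1 - (p:ℝ)⁻¹) := ihS'
        _ ≤ (((S.card : ℝ) + 1) * (1 - (M:ℝ)⁻¹)) * ∏ p ∈ S', (1 - (p:ℝ)⁻¹) :=
            mul_le_mul_of_nonneg_right h1 hP'nonneg
        _ = ((S.card : ℝ) + 1) * ((1 - (M:ℝ)⁻¹) * ∏ p ∈ S', (1 - (p:ℝ)⁻¹)) := by ring

lemma totient_lb (m : ℕ) (hm : 1 ≤ m) :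
    (m:ℝ) ≤ ((m.primeFactors.card : ℝ) + 1) * (Nat.totient m : ℝ) := by
  have hform : (Nat.totient m : ℝ) = (m:ℝ) * ∏ p ∈ m.primeFactors, (1 - (p:ℝ)⁻¹) := by
    have := Nat.totient_eq_mul_prod_factors m
    have h2 : ((Nat.totient m : ℚ) : ℝ) = (((m:ℚ) * ∏ p ∈ m.primeFactors, (1 - (p:ℚ)⁻¹)) : ℚ) := by
      exact_mod_cast congrArg (fun q : ℚ => (q : ℝ)) this
    push_cast at h2
    exact_mod_cast h2
  have hprod := prod_one_sub_inv_ge m.primeFactors (fun p hp => (Nat.prime_of_mem_primeFactors hp).two_le)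
  have hm0 : (0:ℝ) ≤ m := by positivity
  calc (m:ℝ) = (m:ℝ) * 1 := (mul_one _).symm
    _ ≤ (m:ℝ) * (((m.primeFactors.card : ℝ) + 1) * ∏ p ∈ m.primeFactors, (1 - (p:ℝ)⁻¹)) :=
        mul_le_mul_of_nonneg_left hprod hm0
    _ = ((m.primeFactors.card : ℝ) + 1) * ((m:ℝ) * ∏ p ∈ m.primeFactors, (1 - (p:ℝ)⁻¹)) := by ring
    _ = ((m.primeFactors.card : ℝ) + 1) * (Nat.totient m : ℝ) := by rw [hform]

lemma omega_log_le (m : ℕ) (hm : 1 ≤ m) :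
    (m.primeFactors.card : ℝ) * Real.log 2 ≤ Real.log m := by
  have h1 : 2 ^ m.primeFactors.card ≤ rad m := by
    apply Finset.pow_card_le_prod
    intro p hp
    exact (Nat.prime_of_mem_primeFactors hp).two_le
  have h2 : rad m ≤ m := Nat.le_of_dvd hm (Nat.prod_primeFactors_dvd m)
  have h3 : (2:ℝ) ^ m.primeFactors.card ≤ (m:ℝ) := by exact_mod_cast h1.trans h2
  have h4 : Real.log ((2:ℝ) ^ m.primeFactors.card) ≤ Real.log m :=
    Real.log_le_log (by positivity) h3
  rwa [Real.log_pow] at h4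

lemma key_bound (r t : ℕ) (hr : 1 ≤ r) (Δ : ℝ) (hΔ : 0 < Δ) (d : ℕ → ℝ)
    (hd : ∀ k : ℕ, 1 ≤ k → (Nat.totient k : ℝ) * ((k : ℝ) / 2) ^ r / Δ ≤ d k)
    (m : ℕ) (hm : 1 ≤ m) :
    |jordanTotient t m * (rad m : ℝ) ^ t / ((m : ℝ) ^ (2 * t) * d m)| ≤
      Δ * 2 ^ r * (1 + Real.log m / Real.log 2) / (m:ℝ) ^ (r + 1) := by
  have hm' : (1:ℝ) ≤ (m:ℝ) := by exact_mod_cast hm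
  have hmpos : (0:ℝ) < m := by linarith
  have hφ1 : (1:ℝ) ≤ (Nat.totient m : ℝ) := by
    exact_mod_cast Nat.totient_pos.mpr (by omega)
  have hφpos : (0:ℝ) < (Nat.totient m : ℝ) := by linarith
  set X : ℝ := (Nat.totient m : ℝ) * ((m : ℝ) / 2) ^ r with hX
  have hXpos : 0 < X := by
    apply mul_pos hφpos; positivity
  have hdm : 0 < d m := lt_of_lt_of_le (by positivity) (hd m hm)
  -- numerator bounds
  have hprod0 : (0:ℝ) ≤ ∏ p ∈ m.primeFactors, (1 - 1 / (p : ℝ) ^ t) := by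
    apply Finset.prod_nonneg
    intro p hp
    have h2 : (2:ℝ) ≤ p := by exact_mod_cast (Nat.prime_of_mem_primeFactors hp).two_le
    have : (1:ℝ) ≤ (p:ℝ) ^ t := one_le_pow₀ (by linarith)
    have : 1 / (p:ℝ) ^ t ≤ 1 := by
      rw [div_le_one (by linarith)]; linarith
    linarith
  have hprod1 : ∏ p ∈ m.primeFactors, (1 - 1 / (p : ℝ) ^ t) ≤ 1 := by
    apply Finset.prod_le_one
    · intro p hp
      have h2 : (2:ℝ) ≤ p := by exact_mod_cast (Nat.prime_of_mem_primeFactors hp).two_le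
      have : (1:ℝ) ≤ (p:ℝ) ^ t := one_le_pow₀ (by linarith)
      have : 1 / (p:ℝ) ^ t ≤ 1 := by
        rw [div_le_one (by linarith)]; linarith
      linarith
    · intro p hp
      have h2 : (2:ℝ) ≤ p := by exact_mod_cast (Nat.prime_of_mem_primeFactors hp).two_le
      have : (0:ℝ) < (p:ℝ) ^ t := by positivity
      have : 0 < 1 / (p:ℝ) ^ t := by positivity
      linarith
  have hJ0 : 0 ≤ jordanTotient t m := by
    unfold jordanTotient; positivity
  have hJle : jordanTotient t m ≤ (m:ℝ) ^ t := by
    unfold jordanTotient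
    calc (m : ℝ) ^ t * ∏ p ∈ m.primeFactors, (1 - 1 / (p : ℝ) ^ t)
        ≤ (m:ℝ) ^ t * 1 := mul_le_mul_of_nonneg_left hprod1 (by positivity)
      _ = (m:ℝ) ^ t := mul_one _
  have hradle : ((rad m : ℝ)) ^ t ≤ (m:ℝ) ^ t := by
    have : rad m ≤ m := Nat.le_of_dvd (by omega) (Nat.prod_primeFactors_dvd m)
    exact pow_le_pow_left₀ (by positivity) (by exact_mod_cast this) t
  have hrad0 : (0:ℝ) ≤ (rad m : ℝ) ^ t := by positivity
  have hNle : jordanTotient t m * (rad m : ℝ) ^ t ≤ (m:ℝ) ^ (2 * t) := by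
    have : jordanTotient t m * (rad m : ℝ) ^ t ≤ (m:ℝ) ^ t * (m:ℝ) ^ t :=
      mul_le_mul hJle hradle hrad0 (by positivity)
    rwa [← pow_add, ← two_mul] at this
  have hN0 : 0 ≤ jordanTotient t m * (rad m : ℝ) ^ t :=
    mul_nonneg hJ0 hrad0
  have hD : (0:ℝ) < (m : ℝ) ^ (2 * t) * d m := by positivity
  rw [abs_of_nonneg (div_nonneg hN0 hD.le)]
  -- step 1: term ≤ 1 / d m
  have step1 : jordanTotient t m * (rad m : ℝ) ^ t / ((m : ℝ) ^ (2 * t) * d m) ≤ 1 / d m := by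
    rw [div_le_div_iff₀ hD hdm, one_mul]
    calc jordanTotient t m * (rad m : ℝ) ^ t * d m ≤ (m:ℝ) ^ (2*t) * d m :=
        mul_le_mul_of_nonneg_right hNle hdm.le
      _ = (m : ℝ) ^ (2 * t) * d m := rfl
  -- step 2: 1 / d m ≤ Δ / X
  have step2 : 1 / d m ≤ Δ / X := by
    rw [div_le_div_iff₀ hdm hXpos, one_mul]
    have := hd m hm
    calc X = (X / Δ) * Δ := by field_simp
      _ ≤ d m * Δ := mul_le_mul_of_nonneg_right (by rw [hX]; exact this) hΔ.le
      _ = Δ * d m := mul_comm _ _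
  -- step 3: Δ / X ≤ Δ * 2^r * (1 + log m / log 2) / m^(r+1)
  have hlog2 : (0:ℝ) < Real.log 2 := Real.log_pos (by norm_num)
  have hL0 : 0 ≤ Real.log m / Real.log 2 := by
    apply div_nonneg _ hlog2.le
    exact Real.log_nonneg hm'
  have hcard : (m.primeFactors.card : ℝ) + 1 ≤ 1 + Real.log m / Real.log 2 := by
    have := omega_log_le m hm
    have : (m.primeFactors.card : ℝ) ≤ Real.log m / Real.log 2 := by
      rw [le_div_iff₀ hlog2]; exact this
    linarith
  have hmφ : (m:ℝ) ≤ (1 + Real.log m / Real.log 2) * (Nat.totient m : ℝ) :=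
    (totient_lb m hm).trans (mul_le_mul_of_nonneg_right hcard hφpos.le)
  have step3 : Δ / X ≤ Δ * 2 ^ r * (1 + Real.log m / Real.log 2) / (m:ℝ) ^ (r + 1) := by
    rw [div_le_div_iff₀ hXpos (by positivity)]
    have key : (m:ℝ) ^ (r+1) ≤ (1 + Real.log m / Real.log 2) * (Nat.totient m : ℝ) * (m:ℝ) ^ r := by
      calc (m:ℝ) ^ (r+1) = (m:ℝ) * (m:ℝ) ^ r := by rw [pow_succ]; ring
        _ ≤ (1 + Real.log m / Real.log 2) * (Nat.totient m : ℝ) * (m:ℝ) ^ r :=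
            mul_le_mul_of_nonneg_right hmφ (by positivity)
    have hXeq : Δ * 2 ^ r * (1 + Real.log m / Real.log 2) * X
        = Δ * ((1 + Real.log m / Real.log 2) * (Nat.totient m : ℝ) * (m:ℝ) ^ r) := by
      rw [hX, div_pow]
      field_simp
    rw [hXeq]
    exact mul_le_mul_of_nonneg_left key hΔ.le
  linarith [step1, step2, step3]

lemma sqrt_tele (k : ℕ) (hk : 1 ≤ k) :
    1 / (((k:ℝ) + 1) * Real.sqrt ((k:ℝ) + 1)) ≤
      2 * (1 / Real.sqrt k - 1 / Real.sqrt ((k:ℝ) + 1)) := by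
  have hk' : (1:ℝ) ≤ (k:ℝ) := by exact_mod_cast hk
  set a := Real.sqrt k with ha
  set b := Real.sqrt ((k:ℝ) + 1) with hb
  have hapos : 0 < a := Real.sqrt_pos.mpr (by linarith)
  have hbpos : 0 < b := Real.sqrt_pos.mpr (by linarith)
  have hab : a ≤ b := Real.sqrt_le_sqrt (by linarith)
  have ha2 : a ^ 2 = (k:ℝ) := Real.sq_sqrt (by linarith)
  have hb2 : b ^ 2 = (k:ℝ) + 1 := Real.sq_sqrt (by linarith)
  have hgoal : 1 / (b ^ 2 * b) ≤ 2 * (1 / a - 1 / b) := by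
    rw [div_sub_div _ _ hapos.ne' hbpos.ne', one_mul, mul_one, ← mul_div_assoc,
      div_le_div_iff₀ (by positivity) (by positivity), one_mul]
    nlinarith [mul_pos hapos hbpos, mul_pos (mul_pos hapos hbpos) hbpos,
      mul_le_mul_of_nonneg_right (mul_le_mul_of_nonneg_right hab hbpos.le) hbpos.le,
      mul_le_mul_of_nonneg_right (mul_le_mul_of_nonneg_right (mul_le_mul hab hab hapos.le hbpos.le) hbpos.le) hbpos.le]
  rwa [hb2] at hgoal

lemma log_le_two_sqrt {x : ℝ} (hx : 1 ≤ x) : Real.log x ≤ 2 * Real.sqrt x := by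
  have h0 : (0:ℝ) < x := by linarith
  have h1 : Real.log x = 2 * Real.log (Real.sqrt x) := by
    rw [Real.log_sqrt h0.le]; ring
  have h2 : Real.log (Real.sqrt x) ≤ Real.sqrt x - 1 :=
    Real.log_le_sub_one_of_pos (Real.sqrt_pos.mpr h0)
  have h3 : (0:ℝ) ≤ Real.sqrt x := Real.sqrt_nonneg x
  linarith

lemma tail_partial_sum (z : ℝ) (hz : 2 ≤ z) (c : ℝ) (hc : 0 ≤ c) (F : ℕ → ℝ)
    (hFz : ∀ k : ℕ, ¬ z < (k:ℝ) + 1 → F k = 0)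
    (hFb : ∀ k : ℕ, z < (k:ℝ) + 1 →
      F k ≤ c * (2 * (1 / Real.sqrt k - 1 / Real.sqrt ((k:ℝ) + 1)))) :
    ∀ n : ℕ, ∑ i ∈ Finset.range n, F i ≤
      c * (2 / Real.sqrt (z - 1)) - (if z < (n:ℝ) then c * (2 / Real.sqrt n) else 0) := by
  have hz1 : (1:ℝ) ≤ z - 1 := by linarith
  have hsz1 : 0 < Real.sqrt (z - 1) := Real.sqrt_pos.mpr (by linarith)
  intro n
  induction n with
  | zero =>
    simp only [Finset.range_zero, Finset.sum_empty, Nat.cast_zero]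
    rw [if_neg (by linarith)]
    have : 0 ≤ c * (2 / Real.sqrt (z - 1)) := by positivity
    linarith
  | succ n ih =>
    rw [Finset.sum_range_succ]
    by_cases hc1 : z < (n:ℝ) + 1
    · have hn1 : 1 ≤ n := by
        by_contra h
        push_neg at h
        interval_cases n
        · simp at hc1; linarith
      have hn1' : (1:ℝ) ≤ (n:ℝ) := by exact_mod_cast hn1
      have hsn : 0 < Real.sqrt n := Real.sqrt_pos.mpr (by linarith)
      have hsn1 : 0 < Real.sqrt ((n:ℝ) + 1) := Real.sqrt_pos.mpr (by linarith)
      have hFn := hFb n hc1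
      rw [if_pos (by push_cast; linarith)]
      by_cases hc2 : z < (n:ℝ)
      · rw [if_pos hc2] at ih
        have : c * (2 * (1 / Real.sqrt n - 1 / Real.sqrt ((n:ℝ) + 1)))
            = c * (2 / Real.sqrt n) - c * (2 / Real.sqrt ((n:ℝ) + 1)) := by ring
        push_cast
        linarith [hFn, ih, this ▸ hFn]
      · -- all earlier terms vanish
        have hsum0 : ∑ i ∈ Finset.range n, F i = 0 := by
          apply Finset.sum_eq_zero
          intro i hi
          apply hFz
          have hin : (i:ℝ) + 1 ≤ (n:ℝ) := by
            have : i + 1 ≤ n := Finset.mem_range.mp hi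
            exact_mod_cast this
          push_neg at hc2
          linarith
        rw [hsum0, zero_add]
        -- F n ≤ c*2*(1/√n - 1/√(n+1)) and 1/√n ≤ 1/√(z-1)
        have hle : Real.sqrt (z - 1) ≤ Real.sqrt n := Real.sqrt_le_sqrt (by linarith)
        have h2 : c * (2 / Real.sqrt n) ≤ c * (2 / Real.sqrt (z - 1)) := by
          apply mul_le_mul_of_nonneg_left _ hc
          exact div_le_div_of_nonneg_left (by norm_num) hsz1 hle
        have heq : c * (2 * (1 / Real.sqrt n - 1 / Real.sqrt ((n:ℝ) + 1)))
            = c * (2 / Real.sqrt n) - c * (2 / Real.sqrt ((n:ℝ) + 1)) := by ring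
        push_cast
        linarith [heq ▸ hFn]
    · have hFn : F n = 0 := hFz n hc1
      rw [hFn, add_zero]
      rw [if_neg (by push_cast; push_neg at hc1 ⊢; linarith)]
      rcases lt_or_ge z (n:ℝ) with h | h
      · exfalso; push_neg at hc1; linarith
      · rw [if_neg (by push_neg; exact h)] at ih
        exact ih

theorem density_series_converges (r t : ℕ) (hr : 1 ≤ r) (ht : 1 ≤ t)
    (Δ : ℝ) (hΔ : 0 < Δ) (d : ℕ → ℝ)
    (hd : ∀ k : ℕ, 1 ≤ k → (Nat.totient k : ℝ) * ((k : ℝ) / 2) ^ r / Δ ≤ d k) :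
    Summable (fun k : ℕ =>
        |jordanTotient t (k + 1) * (rad (k + 1) : ℝ) ^ t / (((k : ℝ) + 1) ^ (2 * t) * d (k + 1))|)
    ∧ ∃ C : ℝ, 0 < C ∧ ∀ z : ℝ, 2 ≤ z →
        (∑' k : ℕ, if z < (k : ℝ) + 1 then
            |jordanTotient t (k + 1) * (rad (k + 1) : ℝ) ^ t /
              (((k : ℝ) + 1) ^ (2 * t) * d (k + 1))|
          else 0)
          ≤ C * Real.log z / z ^ r := by
  set f : ℕ → ℝ := fun k =>
    |jordanTotient t (k + 1) * (rad (k + 1) : ℝ) ^ t / (((k : ℝ) + 1) ^ (2 * t) * d (k + 1))|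
    with hf
  have hL2 : (0:ℝ) < Real.log 2 := Real.log_pos (by norm_num)
  have hL2' : Real.log 2 ≤ 1 := by
    have := Real.log_le_sub_one_of_pos (show (0:ℝ) < 2 by norm_num)
    linarith
  have hf0 : ∀ k, 0 ≤ f k := fun k => abs_nonneg _
  have hkey : ∀ k : ℕ, f k ≤
      Δ * 2 ^ r * (1 + Real.log ((k:ℝ) + 1) / Real.log 2) / ((k:ℝ) + 1) ^ (r + 1) := by
    intro k
    have := key_bound r t hr Δ hΔ d hd (k + 1) (by omega)
    push_cast at this
    exact this
  -- Part 1 : Summability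
  have hsummable : Summable f := by
    set C₀ : ℝ := Δ * 2 ^ r * (1 + 2 / Real.log 2) with hC₀
    have hC₀pos : 0 < C₀ := by positivity
    have hbound2 : ∀ k : ℕ, f k ≤ C₀ / ((((k:ℝ) + 1)) * Real.sqrt ((k:ℝ) + 1)) := by
      intro k
      set m : ℝ := (k:ℝ) + 1 with hm
      have hm1 : (1:ℝ) ≤ m := by
        have : (0:ℝ) ≤ (k:ℝ) := Nat.cast_nonneg k
        simp only [hm]; linarith
      have hm0 : (0:ℝ) < m := by linarith
      have hsm1 : (1:ℝ) ≤ Real.sqrt m := by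
        rw [show (1:ℝ) = Real.sqrt 1 by simp]
        exact Real.sqrt_le_sqrt hm1
      have hsm0 : (0:ℝ) < Real.sqrt m := by linarith
      have hnum : 1 + Real.log m / Real.log 2 ≤ (1 + 2 / Real.log 2) * Real.sqrt m := by
        have h1 : Real.log m ≤ 2 * Real.sqrt m := log_le_two_sqrt hm1
        have h2 : Real.log m / Real.log 2 ≤ 2 * Real.sqrt m / Real.log 2 := by gcongr
        calc 1 + Real.log m / Real.log 2 ≤ Real.sqrt m + 2 * Real.sqrt m / Real.log 2 := by
              linarith
          _ = (1 + 2 / Real.log 2) * Real.sqrt m := by field_simp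
      have hss : Real.sqrt m * Real.sqrt m = m := Real.mul_self_sqrt (by linarith)
      have hden : (m * Real.sqrt m) * Real.sqrt m ≤ m ^ (r + 1) := by
        have h2 : m ^ 2 ≤ m ^ (r + 1) := pow_le_pow_right₀ hm1 (by omega)
        calc (m * Real.sqrt m) * Real.sqrt m = m * (Real.sqrt m * Real.sqrt m) := by ring
          _ = m * m := by rw [hss]
          _ = m ^ 2 := (sq m).symm
          _ ≤ m ^ (r + 1) := h2
      have := div_le_div₀ (by positivity) hnum (by positivity) hden
      calc f k ≤ Δ * 2 ^ r * (1 + Real.log m / Real.log 2) / m ^ (r + 1) := hkey k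
        _ = Δ * 2 ^ r * ((1 + Real.log m / Real.log 2) / m ^ (r + 1)) := by ring
        _ ≤ Δ * 2 ^ r * ((1 + 2 / Real.log 2) * Real.sqrt m / ((m * Real.sqrt m) * Real.sqrt m)) :=
            mul_le_mul_of_nonneg_left this (by positivity)
        _ = C₀ / (m * Real.sqrt m) := by
            rw [hC₀, mul_div_assoc', div_eq_div_iff (by positivity) (by positivity)]
            ring
    apply (summable_nat_add_iff 1).mp
    apply summable_of_sum_range_le (c := 2 * C₀ * (1 / Real.sqrt 1))
      (fun n => hf0 (n + 1))
    intro n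
    have hterm : ∀ i : ℕ, f (i + 1) ≤
        2 * C₀ * (1 / Real.sqrt ((i:ℝ) + 1)) - 2 * C₀ * (1 / Real.sqrt (((i:ℝ) + 1) + 1)) := by
      intro i
      have htele := sqrt_tele (i + 1) (by omega)
      push_cast at htele
      have h2 := hbound2 (i + 1)
      push_cast at h2
      have := mul_le_mul_of_nonneg_left htele hC₀pos.le
      calc f (i + 1) ≤ C₀ * (1 / (((i:ℝ) + 1 + 1) * Real.sqrt ((i:ℝ) + 1 + 1))) := by
            rw [mul_one_div]; exact h2
        _ ≤ C₀ * (2 * (1 / Real.sqrt ((i:ℝ) + 1) - 1 / Real.sqrt ((i:ℝ) + 1 + 1))) := this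
        _ = 2 * C₀ * (1 / Real.sqrt ((i:ℝ) + 1)) - 2 * C₀ * (1 / Real.sqrt (((i:ℝ) + 1) + 1)) := by
            ring
    calc ∑ i ∈ Finset.range n, f (i + 1)
        ≤ ∑ i ∈ Finset.range n, (2 * C₀ * (1 / Real.sqrt ((i:ℝ) + 1))
            - 2 * C₀ * (1 / Real.sqrt (((i:ℝ) + 1) + 1))) :=
          Finset.sum_le_sum (fun i _ => hterm i)
      _ = 2 * C₀ * (1 / Real.sqrt ((0:ℝ) + 1)) - 2 * C₀ * (1 / Real.sqrt ((n:ℝ) + 1)) := by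
          have htel := Finset.sum_range_sub' (fun i : ℕ => 2 * C₀ * (1 / Real.sqrt ((i:ℝ) + 1))) n
          push_cast at htel
          convert htel using 3 <;> push_cast <;> ring
      _ ≤ 2 * C₀ * (1 / Real.sqrt 1) := by
          have h1 : 0 ≤ 2 * C₀ * (1 / Real.sqrt ((n:ℝ) + 1)) := by positivity
          have h2 : ((0:ℝ) + 1) = 1 := by norm_num
          rw [h2]
          linarith
  refine ⟨hsummable, Δ * 2 ^ r * (12 * Real.sqrt 2) / Real.log 2 ^ 2, by positivity, ?_⟩
  intro z hz
  have hz0 : (0:ℝ) < z := by linarith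
  have hLz : Real.log 2 ≤ Real.log z := Real.log_le_log (by norm_num) hz
  have hLzpos : 0 < Real.log z := Real.log_pos (by linarith)
  have hsz0 : 0 < Real.sqrt z := Real.sqrt_pos.mpr hz0
  have hzr1 : (0:ℝ) < z ^ (r - 1) := pow_pos hz0 _
  set c : ℝ := Δ * 2 ^ r * (6 * Real.log z) / (Real.log 2 ^ 2 * Real.sqrt z * z ^ (r - 1))
    with hc
  have hcpos : 0 < c := by rw [hc]; positivity
  -- pointwise bound on the tail terms
  have hptw : ∀ k : ℕ, z < (k:ℝ) + 1 →
      f k ≤ c * (2 * (1 / Real.sqrt k - 1 / Real.sqrt ((k:ℝ) + 1))) := by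
    intro k hzk
    have hk1 : 1 ≤ k := by
      by_contra h
      push_neg at h
      interval_cases k
      norm_num at hzk
      linarith
    have h0 := hkey k
    set m : ℝ := (k:ℝ) + 1 with hm
    have hzm : z < m := hzk
    have hm0 : (0:ℝ) < m := by linarith
    have hm1 : (1:ℝ) ≤ m := by linarith
    have hmz : z ≤ m := hzm.le
    have hsm0 : 0 < Real.sqrt m := Real.sqrt_pos.mpr hm0
    have hszsm : Real.sqrt z ≤ Real.sqrt m := Real.sqrt_le_sqrt hmz
    have hsmsm : Real.sqrt m * Real.sqrt m = m := Real.mul_self_sqrt hm0.le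
    have hu1 : 1 ≤ Real.sqrt m / Real.sqrt z := (one_le_div hsz0).mpr hszsm
    have hlogm2 : Real.log 2 ≤ Real.log m := Real.log_le_log (by norm_num) (by linarith)
    have hlogmz : Real.log m ≤ Real.log z + 2 * (Real.sqrt m / Real.sqrt z) := by
      have hdiv : Real.log m = Real.log z + Real.log (m / z) := by
        rw [Real.log_div hm0.ne' hz0.ne']
        ring
      have h1 : (1:ℝ) ≤ m / z := (one_le_div hz0).mpr hmz
      have h2 : Real.log (m / z) ≤ 2 * Real.sqrt (m / z) := log_le_two_sqrt h1
      have h3 : Real.sqrt (m / z) = Real.sqrt m / Real.sqrt z := Real.sqrt_div hm0.le z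
      rw [h3] at h2
      linarith
    have hmain1 : Real.log z + 2 * (Real.sqrt m / Real.sqrt z) ≤
        3 * (Real.log z / Real.log 2) * (Real.sqrt m / Real.sqrt z) := by
      set u : ℝ := Real.sqrt m / Real.sqrt z with hu
      have hrw : 3 * (Real.log z / Real.log 2) * u = 3 * Real.log z * u / Real.log 2 := by
        ring
      rw [hrw, le_div_iff₀ hL2]
      nlinarith [mul_le_mul_of_nonneg_left hu1 hLzpos.le,
        mul_le_mul_of_nonneg_right hLz (by linarith : (0:ℝ) ≤ 2 * u),
        mul_le_mul_of_nonneg_left hL2' hLzpos.le]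
    have h1L : 1 + Real.log m / Real.log 2 ≤ 2 * Real.log m / Real.log 2 := by
      have : 1 ≤ Real.log m / Real.log 2 := (one_le_div hL2).mpr hlogm2
      have h2' : 2 * Real.log m / Real.log 2 = Real.log m / Real.log 2 + Real.log m / Real.log 2 := by
        ring
      linarith
    have hnum : 1 + Real.log m / Real.log 2 ≤
        6 * Real.log z * (Real.sqrt m / Real.sqrt z) / Real.log 2 ^ 2 := by
      have ha : Real.log m ≤ 3 * (Real.log z / Real.log 2) * (Real.sqrt m / Real.sqrt z) :=
        le_trans hlogmz hmain1
      calc 1 + Real.log m / Real.log 2 ≤ 2 * Real.log m / Real.log 2 := h1L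
        _ ≤ 2 * (3 * (Real.log z / Real.log 2) * (Real.sqrt m / Real.sqrt z)) / Real.log 2 := by
            gcongr
        _ = 6 * Real.log z * (Real.sqrt m / Real.sqrt z) / Real.log 2 ^ 2 := by
            field_simp
            ring
    have hden : z ^ (r - 1) * ((m * Real.sqrt m) * Real.sqrt m) ≤ m ^ (r + 1) := by
      have hzr : z ^ (r - 1) ≤ m ^ (r - 1) := pow_le_pow_left₀ hz0.le hmz _
      have he1 : (m * Real.sqrt m) * Real.sqrt m = m ^ 2 := by
        rw [mul_assoc, hsmsm]; exact (sq m).symm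
      have he2 : m ^ (r + 1) = m ^ (r - 1) * m ^ 2 := by
        rw [← pow_add]
        congr 1
        omega
      rw [he1, he2]
      exact mul_le_mul_of_nonneg_right hzr (by positivity)
    have htele := sqrt_tele k hk1
    push_cast at htele
    have hstep : f k ≤ c * (1 / (m * Real.sqrt m)) := by
      have hd1 := div_le_div₀ (by positivity :
          (0:ℝ) ≤ Δ * 2 ^ r * (6 * Real.log z * (Real.sqrt m / Real.sqrt z) / Real.log 2 ^ 2))
        (mul_le_mul_of_nonneg_left hnum (by positivity : (0:ℝ) ≤ Δ * 2 ^ r))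
        (by positivity : (0:ℝ) < z ^ (r - 1) * ((m * Real.sqrt m) * Real.sqrt m))
        hden
      have heq : Δ * 2 ^ r * (6 * Real.log z * (Real.sqrt m / Real.sqrt z) / Real.log 2 ^ 2) /
          (z ^ (r - 1) * ((m * Real.sqrt m) * Real.sqrt m)) = c * (1 / (m * Real.sqrt m)) := by
        rw [hc, mul_one_div, div_div, div_eq_div_iff (by positivity) (by positivity)]
        field_simp
      calc f k ≤ Δ * 2 ^ r * (1 + Real.log m / Real.log 2) / m ^ (r + 1) := h0
        _ ≤ Δ * 2 ^ r * (6 * Real.log z * (Real.sqrt m / Real.sqrt z) / Real.log 2 ^ 2) /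
            (z ^ (r - 1) * ((m * Real.sqrt m) * Real.sqrt m)) := hd1
        _ = c * (1 / (m * Real.sqrt m)) := heq
    calc f k ≤ c * (1 / (m * Real.sqrt m)) := hstep
      _ ≤ c * (2 * (1 / Real.sqrt k - 1 / Real.sqrt ((k:ℝ) + 1))) :=
          mul_le_mul_of_nonneg_left htele hcpos.le
  -- apply the telescoping partial sum bound
  have hFz : ∀ k : ℕ, ¬ z < (k:ℝ) + 1 → (if z < (k:ℝ) + 1 then f k else 0) = 0 :=
    fun k h => if_neg h
  have hFb' : ∀ k : ℕ, z < (k:ℝ) + 1 → (if z < (k:ℝ) + 1 then f k else 0) ≤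
      c * (2 * (1 / Real.sqrt k - 1 / Real.sqrt ((k:ℝ) + 1))) := by
    intro k h
    rw [if_pos h]
    exact hptw k h
  have hps := tail_partial_sum z hz c hcpos.le _ hFz hFb'
  have hps' : ∀ n : ℕ, ∑ i ∈ Finset.range n, (if z < (i:ℝ) + 1 then f i else 0) ≤
      c * (2 / Real.sqrt (z - 1)) := by
    intro n
    refine (hps n).trans ?_
    have : (0:ℝ) ≤ (if z < (n:ℝ) then c * (2 / Real.sqrt n) else 0) := by
      split
      · positivity
      · exact le_refl 0
    linarith
  have hnonneg : ∀ k : ℕ, 0 ≤ (if z < (k:ℝ) + 1 then f k else 0) := by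
    intro k
    split
    · exact hf0 k
    · exact le_refl 0
  have htsum := Real.tsum_le_of_sum_range_le hnonneg hps'
  -- final constant manipulation
  have hsz1 : 0 < Real.sqrt (z - 1) := Real.sqrt_pos.mpr (by linarith)
  have hstepa : 2 / Real.sqrt (z - 1) ≤ 2 * Real.sqrt 2 / Real.sqrt z := by
    rw [div_le_div_iff₀ hsz1 hsz0]
    have h1 : Real.sqrt z ≤ Real.sqrt 2 * Real.sqrt (z - 1) := by
      rw [← Real.sqrt_mul (by norm_num : (0:ℝ) ≤ 2)]
      exact Real.sqrt_le_sqrt (by linarith)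
    nlinarith [Real.sqrt_nonneg (z - 1), Real.sqrt_nonneg (2:ℝ)]
  have he1 : Real.sqrt z * Real.sqrt z = z := Real.mul_self_sqrt hz0.le
  have he2 : z ^ (r - 1) * z = z ^ r := by
    rw [← pow_succ]
    congr 1
    omega
  have hA : c * (2 * Real.sqrt 2 / Real.sqrt z) =
      Δ * 2 ^ r * (12 * Real.sqrt 2) / Real.log 2 ^ 2 * Real.log z / z ^ r := by
    rw [hc, div_mul_div_comm, div_mul_eq_mul_div, div_div,
      div_eq_div_iff (by positivity) (by positivity)]
    have : Real.log 2 ^ 2 * Real.sqrt z * z ^ (r - 1) * Real.sqrt z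
        = Real.log 2 ^ 2 * (z ^ (r - 1) * (Real.sqrt z * Real.sqrt z)) := by ring
    rw [this, he1, he2]
    ring
  calc (∑' k : ℕ, if z < (k:ℝ) + 1 then f k else 0) ≤ c * (2 / Real.sqrt (z - 1)) := htsum
    _ ≤ c * (2 * Real.sqrt 2 / Real.sqrt z) := mul_le_mul_of_nonneg_left hstepa hcpos.le
    _ = Δ * 2 ^ r * (12 * Real.sqrt 2) / Real.log 2 ^ 2 * Real.log z / z ^ r := hA
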